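/- Let G act sharply 2-transitively on Ω and suppose some point stabilizer contains an involution. Then all non-identity elements of the set Inv(G)·Inv(G) (products of two involutions) have the same order, and this common order is either infinite or a prime number. -/

import Mathlib

def IsSharply2Transitive (G Ω : Type*) [Group G] [MulAction G Ω] : Prop :=
  ∀ x y z w : Ω, x ≠ y → z ≠ w → ∃! g : G, g • x = z ∧ g • y = w

/-!
An element is determined by the images of two points. Hence any two involutions are conjugate,
so, one of them fixing a point, every involution fixes a point, and an involution is determined by
any point it fixes. For involutions `σ ≠ τ` the fixed points `a ≠ b` thus determine the pair, and
the element carrying `(a, b)` to the fixed points of another such pair conjugates one pair into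
the other: all nontrivial products `σ * τ` are conjugate. If `t = i * j` is one of them, the
elements `i * t ^ k` are involutions, as in a dihedral group, so every nontrivial power
`t ^ k = i * (i * t ^ k)` has the order of `t`, which forces that order to be infinite or prime.
-/

section OrderOf

theorem orderOf_eq_zero_or_prime_of_forall_pow {M : Type*} [Monoid M] {t : M} (ht : t ≠ 1)
    (hpow : ∀ k : ℕ, t ^ k ≠ 1 → orderOf (t ^ k) = orderOf t) :
    orderOf t = 0 ∨ (orderOf t).Prime := by
  refine or_iff_not_imp_left.mpr fun h0 => ?_
  have h1 : orderOf t ≠ 1 := mt orderOf_eq_one_iff.mp ht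
  by_contra hprime
  set p := (orderOf t).minFac
  have hp : p.Prime := Nat.minFac_prime h1
  have hlt : p < orderOf t := (Nat.not_prime_iff_minFac_lt (by omega)).mp hprime
  have hdiv : orderOf (t ^ p) = orderOf t / p := orderOf_pow_of_dvd hp.ne_zero (Nat.minFac_dvd _)
  have hsmaller : orderOf t / p < orderOf t := Nat.div_lt_self (by omega) hp.one_lt
  rw [← hdiv, hpow p (pow_ne_one_of_lt_orderOf hp.ne_zero hlt)] at hsmaller
  exact lt_irrefl _ hsmaller

variable {G : Type*} [Group G] {i j : G}

theorem conj_mul_pow_eq_inv_of_orderOf_eq_two (hi : orderOf i = 2) (hj : orderOf j = 2) (k : ℕ) :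
    i * (i * j) ^ k * i⁻¹ = ((i * j) ^ k)⁻¹ := by
  have hi' := inv_eq_self_of_orderOf_eq_two hi
  have hj' := inv_eq_self_of_orderOf_eq_two hj
  have hconj : i * (i * j) * i⁻¹ = (i * j)⁻¹ :=
    calc i * (i * j) * i⁻¹ = i⁻¹ * (i * j) * i⁻¹ := by rw [hi']
      _ = (i * j)⁻¹ := by rw [mul_inv_rev, hj']; group
  rw [← conj_pow, hconj, inv_pow]

theorem sq_mul_mul_pow_eq_one_of_orderOf_eq_two (hi : orderOf i = 2) (hj : orderOf j = 2)
    (k : ℕ) : (i * (i * j) ^ k) ^ 2 = 1 :=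
  calc (i * (i * j) ^ k) ^ 2 = (i * (i * j) ^ k * i⁻¹) * (i * j) ^ k := by
        rw [inv_eq_self_of_orderOf_eq_two hi, sq, ← mul_assoc]
    _ = 1 := by rw [conj_mul_pow_eq_inv_of_orderOf_eq_two hi hj, inv_mul_cancel]

theorem orderOf_mul_eq_zero_or_prime (hi : orderOf i = 2) (hj : orderOf j = 2) (hij : i * j ≠ 1)
    (hcommon : ∀ σ τ : G, orderOf σ = 2 → orderOf τ = 2 → σ * τ ≠ 1 →
      orderOf (σ * τ) = orderOf (i * j)) :
    orderOf (i * j) = 0 ∨ (orderOf (i * j)).Prime := by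
  have hii : i * i = 1 := by rw [← sq, ← hi, pow_orderOf_eq_one]
  refine orderOf_eq_zero_or_prime_of_forall_pow hij fun k hk => ?_
  by_cases hrefl : i * (i * j) ^ k = 1
  · -- then `(i * j) ^ k = i` commutes with `i * j`, which is therefore its own inverse
    have hk : (i * j) ^ k = i := by
      rw [eq_inv_of_mul_eq_one_right hrefl, inv_eq_self_of_orderOf_eq_two hi]
    have hcomm : Commute i (i * j) := by simpa only [hk] using Commute.pow_self (i * j) k
    have hself : i * j = (i * j)⁻¹ := by
      simpa only [pow_one, hcomm.mul_inv_cancel] using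
        conj_mul_pow_eq_inv_of_orderOf_eq_two hi hj 1
    rw [hk, hi, eq_comm, orderOf_eq_prime_iff, sq, mul_eq_one_iff_eq_inv]
    exact ⟨hself, hij⟩
  · have h2 : orderOf (i * (i * j) ^ k) = 2 :=
      orderOf_eq_prime_iff.mpr ⟨sq_mul_mul_pow_eq_one_of_orderOf_eq_two hi hj k, hrefl⟩
    have hk' : i * (i * (i * j) ^ k) = (i * j) ^ k := by rw [← mul_assoc, hii, one_mul]
    rw [← hk']
    exact hcommon i _ hi h2 (hk'.symm ▸ hk)

end OrderOf

namespace IsSharply2Transitive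

variable {G Ω : Type*} [Group G] [MulAction G Ω]

theorem eq_of_smul_eq_smul (h : IsSharply2Transitive G Ω) {a b : Ω} (hab : a ≠ b) {g₁ g₂ : G}
    (ha : g₁ • a = g₂ • a) (hb : g₁ • b = g₂ • b) : g₁ = g₂ := by
  obtain ⟨g, -, hg⟩ := h a b (g₁ • a) (g₁ • b) hab ((MulAction.injective g₁).ne hab)
  exact (hg g₁ ⟨rfl, rfl⟩).trans (hg g₂ ⟨ha.symm, hb.symm⟩).symm

theorem eq_one_of_smul_eq_self (h : IsSharply2Transitive G Ω) {a b : Ω} (hab : a ≠ b) {g : G}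
    (ha : g • a = a) (hb : g • b = b) : g = 1 :=
  h.eq_of_smul_eq_smul hab (by rwa [one_smul]) (by rwa [one_smul])

theorem exists_smul_ne [Nontrivial Ω] (h : IsSharply2Transitive G Ω) {g : G} (hg : g ≠ 1) :
    ∃ c : Ω, g • c ≠ c := by
  obtain ⟨a, b, hab⟩ := exists_pair_ne Ω
  by_contra! hfix
  exact hg (h.eq_one_of_smul_eq_self hab (hfix a) (hfix b))

theorem semiconjBy_of_smul_eq (h : IsSharply2Transitive G Ω) {σ τ g : G} (hσ : orderOf σ = 2)
    (hτ : orderOf τ = 2) {c : Ω} (hc : τ • c ≠ c) (hg : g • τ • c = σ • g • c) :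
    SemiconjBy g τ σ := by
  have hσσ : ∀ x : Ω, σ • σ • x = x := fun x => by
    rw [smul_smul, ← sq, ← hσ, pow_orderOf_eq_one, one_smul]
  have hττ : τ • τ • c = c := by rw [smul_smul, ← sq, ← hτ, pow_orderOf_eq_one, one_smul]
  refine h.eq_of_smul_eq_smul hc.symm ?_ ?_
  · rw [mul_smul, mul_smul, hg]
  · rw [mul_smul, mul_smul, hττ, hg, hσσ]

theorem isConj_of_orderOf_eq_two [Nontrivial Ω] (h : IsSharply2Transitive G Ω) {σ τ : G}
    (hσ : orderOf σ = 2) (hτ : orderOf τ = 2) : IsConj τ σ := by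
  obtain ⟨c, hc⟩ := h.exists_smul_ne (orderOf_eq_prime_iff.mp hτ).2
  obtain ⟨d, hd⟩ := h.exists_smul_ne (orderOf_eq_prime_iff.mp hσ).2
  obtain ⟨g, ⟨hgc, hgτc⟩, -⟩ := h c (τ • c) d (σ • d) hc.symm hd.symm
  have hsemi : SemiconjBy g τ σ := h.semiconjBy_of_smul_eq hσ hτ hc (by rw [hgτc, hgc])
  exact ⟨toUnits g, hsemi⟩

theorem exists_smul_eq_self_of_orderOf_eq_two [Nontrivial Ω] (h : IsSharply2Transitive G Ω)
    {σ₀ : G} {ω : Ω} (hσ₀ : orderOf σ₀ = 2) (hω : σ₀ • ω = ω) {τ : G} (hτ : orderOf τ = 2) :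
    ∃ a : Ω, τ • a = a := by
  obtain ⟨g, hg⟩ := isConj_iff.mp (h.isConj_of_orderOf_eq_two hτ hσ₀)
  exact ⟨g • ω, by rw [← hg, mul_smul, mul_smul, inv_smul_smul, hω]⟩

theorem eq_of_orderOf_eq_two_of_smul_eq_self [Nontrivial Ω] (h : IsSharply2Transitive G Ω)
    {σ τ : G} (hσ : orderOf σ = 2) (hτ : orderOf τ = 2) {x : Ω} (hσx : σ • x = x)
    (hτx : τ • x = x) : σ = τ := by
  obtain ⟨y, hy⟩ := exists_ne x
  have hmoves : ∀ ρ : G, orderOf ρ = 2 → ρ • x = x → ρ • y ≠ y := fun ρ hρ hρx hρy =>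
    (orderOf_eq_prime_iff.mp hρ).2 (h.eq_one_of_smul_eq_self hy.symm hρx hρy)
  obtain ⟨g, ⟨hgy, hgσy⟩, -⟩ :=
    h y (σ • y) y (τ • y) (hmoves σ hσ hσx).symm (hmoves τ hτ hτx).symm
  have hconj : g * σ = τ * g :=
    h.semiconjBy_of_smul_eq hτ hσ (hmoves σ hσ hσx) (by rw [hgσy, hgy])
  -- `τ` fixes `g • x` as well as `x`, so these points coincide
  have hgx : g • x = x := by
    by_contra hne
    refine (orderOf_eq_prime_iff.mp hτ).2 (h.eq_one_of_smul_eq_self hne ?_ hτx)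
    rw [← mul_smul, ← hconj, mul_smul, hσx]
  have hg : g = 1 := h.eq_one_of_smul_eq_self hy.symm hgx hgy
  rwa [hg, one_mul, mul_one] at hconj

theorem semiconjBy_of_smul_eq_self [Nontrivial Ω] (h : IsSharply2Transitive G Ω) {σ σ' g : G}
    (hσ : orderOf σ = 2) (hσ' : orderOf σ' = 2) {a : Ω} (ha : σ • a = a)
    (hga : σ' • g • a = g • a) : SemiconjBy g σ σ' := by
  have hsemi : SemiconjBy g σ (g * σ * g⁻¹) := by simp [SemiconjBy]
  have hconj : orderOf (g * σ * g⁻¹) = 2 := hsemi.orderOf_eq g ▸ hσ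
  have hfix : (g * σ * g⁻¹) • g • a = g • a := by rw [mul_smul, mul_smul, inv_smul_smul, ha]
  rwa [h.eq_of_orderOf_eq_two_of_smul_eq_self hconj hσ' hfix hga] at hsemi

theorem isConj_mul_of_orderOf_eq_two [Nontrivial Ω] (h : IsSharply2Transitive G Ω)
    (hfix : ∀ ρ : G, orderOf ρ = 2 → ∃ a : Ω, ρ • a = a) {σ τ σ' τ' : G}
    (hσ : orderOf σ = 2) (hτ : orderOf τ = 2) (hσ' : orderOf σ' = 2) (hτ' : orderOf τ' = 2)
    (hστ : σ * τ ≠ 1) (hστ' : σ' * τ' ≠ 1) : IsConj (σ * τ) (σ' * τ') := by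
  have hfix_ne : ∀ {ρ ρ' : G}, orderOf ρ = 2 → orderOf ρ' = 2 → ρ * ρ' ≠ 1 →
      ∃ a b : Ω, a ≠ b ∧ ρ • a = a ∧ ρ' • b = b := by
    intro ρ ρ' hρ hρ' hρρ'
    obtain ⟨a, ha⟩ := hfix ρ hρ
    obtain ⟨b, hb⟩ := hfix ρ' hρ'
    refine ⟨a, b, fun hab => hρρ' ?_, ha, hb⟩
    rw [h.eq_of_orderOf_eq_two_of_smul_eq_self hρ hρ' ha (hab ▸ hb), ← sq, ← hρ',
      pow_orderOf_eq_one]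
  obtain ⟨a, b, hab, ha, hb⟩ := hfix_ne hσ hτ hστ
  obtain ⟨a', b', hab', ha', hb'⟩ := hfix_ne hσ' hτ' hστ'
  obtain ⟨g, ⟨hga, hgb⟩, -⟩ := h a b a' b' hab hab'
  have hsemiσ : SemiconjBy g σ σ' := h.semiconjBy_of_smul_eq_self hσ hσ' ha (by rw [hga, ha'])
  have hsemiτ : SemiconjBy g τ τ' := h.semiconjBy_of_smul_eq_self hτ hτ' hb (by rw [hgb, hb'])
  exact ⟨toUnits g, hsemiσ.mul_right hsemiτ⟩

end IsSharply2Transitive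

/-- All nonidentity products of two involutions share the same order, which is
infinite (`orderOf _ = 0`) or prime. -/
theorem orderOf_prod_involutions {G Ω : Type*} [Group G] [MulAction G Ω] [Nontrivial Ω]
    (h : IsSharply2Transitive G Ω)
    (hinv : ∃ (ω : Ω) (σ : G), orderOf σ = 2 ∧ σ • ω = ω) :
    ∃ o : ℕ, (o = 0 ∨ o.Prime) ∧
      ∀ σ τ : G, orderOf σ = 2 → orderOf τ = 2 → σ * τ ≠ 1 → orderOf (σ * τ) = o := by
  obtain ⟨ω, σ₀, hσ₀, hω⟩ := hinv
  have hfix : ∀ ρ : G, orderOf ρ = 2 → ∃ a : Ω, ρ • a = a := fun _ hρ =>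
    h.exists_smul_eq_self_of_orderOf_eq_two hσ₀ hω hρ
  by_cases hprod : ∃ i j : G, orderOf i = 2 ∧ orderOf j = 2 ∧ i * j ≠ 1
  · obtain ⟨i, j, hi, hj, hij⟩ := hprod
    have hcommon : ∀ σ τ : G, orderOf σ = 2 → orderOf τ = 2 → σ * τ ≠ 1 →
        orderOf (σ * τ) = orderOf (i * j) := fun σ τ hσ hτ hστ => by
      obtain ⟨u, hu⟩ := h.isConj_mul_of_orderOf_eq_two hfix hσ hτ hi hj hστ hij
      exact hu.orderOf_eq _
    exact ⟨_, orderOf_mul_eq_zero_or_prime hi hj hij hcommon, hcommon⟩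
  · push Not at hprod
    exact ⟨0, Or.inl rfl, fun σ τ hσ hτ hστ => absurd (hprod σ τ hσ hτ) hστ⟩
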